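/- Let F be a flipclass of paths in B(𝔖_n), let E = E(F), and let m = |E|. Then: (1) the set F′ = {r_E(Γ) : Γ ∈ F} is a flipclass of 𝔖_m, and the map r_E : F → F′ is a bijection commuting with all flip operators and satisfying r_E(l_i(Γ)) = l_i(r_E(Γ)) for every Γ ∈ F and every i (where l_i denotes the i-th label of a path); (2) r_E induces isomorphisms of edge-labelled directed graphs S_F ≅ S_{F′} and TS_F ≅ TS_{F′}; (3) for any reflection ordering ⪯ on 𝔖_n, the increasing paths of F with respect to ⪯ correspond under r_E to the increasing paths of F′ with respect to ⪯_{r_E}; (4) r_E induces an isomorphism of flipclasses from F to F′. -/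

import Mathlib

open MvPolynomial

/-- The symmetric group `𝔖ₙ`, realized as permutations of `Fin n`. -/
abbrev Pm (n : ℕ) := Equiv.Perm (Fin n)

/-- The Coxeter length of a permutation: its number of inversions. -/
def len {n : ℕ} (w : Pm n) : ℕ :=
  (Finset.univ.filter fun q : Fin n × Fin n => q.1 < q.2 ∧ w q.2 < w q.1).card

/-- Edges of the Bruhat graph `B(𝔖ₙ)`: `a → b` iff `b * a⁻¹` is a transposition and
`ℓ(a) < ℓ(b)`.  The label of the edge is `b * a⁻¹`. -/
def BEdge {n : ℕ} (a b : Pm n) : Prop :=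
  (b * a⁻¹).IsSwap ∧ len a < len b

/-- Bruhat order: `u ≤ v` iff there is a directed path from `u` to `v` in the Bruhat graph. -/
def bruhatLE {n : ℕ} : Pm n → Pm n → Prop := Relation.ReflTransGen BEdge

/-- Strict Bruhat order. -/
def bruhatLT {n : ℕ} (a b : Pm n) : Prop := bruhatLE a b ∧ a ≠ b

/-- Covering relation of Bruhat order. -/
def bruhatCov {n : ℕ} (a b : Pm n) : Prop :=
  bruhatLT a b ∧ ∀ z, bruhatLT a z → bruhatLT z b → False

/-- A path of length `h` from `u` to `v` in the Bruhat graph, encoded as a function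
`ℕ → 𝔖ₙ` normalized to be constantly `v` from time `h` on. -/
def IsPath (n h : ℕ) (u v : Pm n) (p : ℕ → Pm n) : Prop :=
  p 0 = u ∧ (∀ j, h ≤ j → p j = v) ∧ ∀ i, i < h → BEdge (p i) (p (i + 1))

/-- The `i`-th label (`0 ≤ i ≤ h-1`) of a path. -/
def lab {n : ℕ} (p : ℕ → Pm n) (i : ℕ) : Pm n := p (i + 1) * (p i)⁻¹

/-- `q` is obtained from `p` by the `i`-th flip (`1 ≤ i ≤ h-1`): they differ exactly at
position `i`. -/
def FlipAt {n : ℕ} (h i : ℕ) (p q : ℕ → Pm n) : Prop :=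
  0 < i ∧ i < h ∧ p i ≠ q i ∧ ∀ j, j ≠ i → p j = q j

/-- One application of a flip operator on paths of length `h` from `u` to `v`. -/
def FlipStep (n h : ℕ) (u v : Pm n) (p q : ℕ → Pm n) : Prop :=
  IsPath n h u v p ∧ IsPath n h u v q ∧ ∃ i, FlipAt h i p q

/-- `F` is an `h`-flipclass of paths from `u` to `v`: an orbit of the group generated by
the flip operators, i.e. a connected component under single flips. -/
def IsFlipclass (n h : ℕ) (u v : Pm n) (F : Set (ℕ → Pm n)) : Prop :=
  ∃ p, IsPath n h u v p ∧ F = {q | Relation.ReflTransGen (FlipStep n h u v) p q}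

/-- Vertex set of the support graph `S_F`. -/
def SV (n h : ℕ) (F : Set (ℕ → Pm n)) : Set (Pm n) :=
  {a | ∃ p ∈ F, ∃ i, i ≤ h ∧ p i = a}

/-- Edge relation of the support graph `S_F` (labels are determined: `b * a⁻¹`). -/
def SE (n h : ℕ) (F : Set (ℕ → Pm n)) (a b : Pm n) : Prop :=
  ∃ p ∈ F, ∃ i, i < h ∧ p i = a ∧ p (i + 1) = b

/-- Vertex set of the time-support graph `TS_F`. -/
def TSV (n h : ℕ) (F : Set (ℕ → Pm n)) : Set (Pm n × ℕ) :=
  {x | x.2 ≤ h ∧ ∃ p ∈ F, p x.2 = x.1}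

/-- Edge relation of the time-support graph `TS_F`. -/
def TSE (n h : ℕ) (F : Set (ℕ → Pm n)) (x y : Pm n × ℕ) : Prop :=
  x.2 < h ∧ y.2 = x.2 + 1 ∧ ∃ p ∈ F, p x.2 = x.1 ∧ p (x.2 + 1) = y.1

/-- In-degree of a vertex of `TS_F`. -/
noncomputable def indeg (n h : ℕ) (F : Set (ℕ → Pm n)) (x : Pm n × ℕ) : ℕ :=
  Set.ncard {w | TSE n h F w x}

/-- Out-degree of a vertex of `TS_F`. -/
noncomputable def outdeg (n h : ℕ) (F : Set (ℕ → Pm n)) (x : Pm n × ℕ) : ℕ :=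
  Set.ncard {w | TSE n h F x w}

/-- The `t`-vector of `F`: `tᵢ` is the number of vertices of `TS_F` at time `i`. -/
noncomputable def tvec (n h : ℕ) (F : Set (ℕ → Pm n)) (i : ℕ) : ℕ :=
  Set.ncard {a : Pm n | (a, i) ∈ TSV n h F}

lemma TSV_finite (n h : ℕ) (F : Set (ℕ → Pm n)) : (TSV n h F).Finite :=
  Set.Finite.subset (Set.finite_univ.prod (Set.finite_Iic h))
    (fun _ hx => Set.mem_prod.mpr ⟨Set.mem_univ _, hx.1⟩)

/-- The `ι`-polynomial of `F`:
`ι_F(x,y,t) = Σ_{(a,i) ∈ V(TS_F)} x^indeg(a,i) y^outdeg(a,i) t^i`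
(the variables `x, y, t` are `X 0, X 1, X 2`). -/
noncomputable def iota (n h : ℕ) (F : Set (ℕ → Pm n)) : MvPolynomial (Fin 3) ℤ :=
  ∑ x ∈ (TSV_finite n h F).toFinset,
    X 0 ^ indeg n h F x * X 1 ^ outdeg n h F x * X 2 ^ x.2

/-- A reflection ordering on the transpositions of `𝔖ₙ`: a total order `⪯` on the set of
transpositions such that for all `a < b < c`, either
`(a,b) ⪯ (a,c) ⪯ (b,c)` or `(b,c) ⪯ (a,c) ⪯ (a,b)`. -/
structure ReflOrder (n : ℕ) where
  le : Pm n → Pm n → Prop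
  le_refl : ∀ t : Pm n, t.IsSwap → le t t
  le_antisymm : ∀ s t : Pm n, s.IsSwap → t.IsSwap → le s t → le t s → s = t
  le_trans : ∀ r s t : Pm n, r.IsSwap → s.IsSwap → t.IsSwap → le r s → le s t → le r t
  le_total : ∀ s t : Pm n, s.IsSwap → t.IsSwap → le s t ∨ le t s
  reflection_cond : ∀ a b c : Fin n, a < b → b < c →
    (le (Equiv.swap a b) (Equiv.swap a c) ∧ le (Equiv.swap a c) (Equiv.swap b c)) ∨
    (le (Equiv.swap b c) (Equiv.swap a c) ∧ le (Equiv.swap a c) (Equiv.swap a b))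

/-- A path (of length `h`) is increasing w.r.t. an order `le` on transpositions if its
sequence of labels is weakly increasing. -/
def IncreasingRel {n : ℕ} (h : ℕ) (le : Pm n → Pm n → Prop) (p : ℕ → Pm n) : Prop :=
  ∀ i, i + 1 < h → le (lab p i) (lab p (i + 1))

/-- The number of increasing paths (w.r.t. a reflection ordering) in `F`. -/
noncomputable def cnt (n h : ℕ) (F : Set (ℕ → Pm n)) (ord : ReflOrder n) : ℕ :=
  Set.ncard {p ∈ F | IncreasingRel h ord.le p}

/-- Lexicographic comparison of the label sequences of two paths of length `h`. -/
def LabelLexLe {n : ℕ} (h : ℕ) (le : Pm n → Pm n → Prop) (p q : ℕ → Pm n) : Prop :=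
  (∀ i, i < h → lab p i = lab q i) ∨
  ∃ i, i < h ∧ (∀ j, j < i → lab p j = lab q j) ∧ lab p i ≠ lab q i ∧ le (lab p i) (lab q i)

/-- A path of length `h` from `(u,0)` to `(v,h)` in the time-support graph `TS_F`,
encoded by its sequence of permutation components. -/
def IsTSPath (n h : ℕ) (F : Set (ℕ → Pm n)) (u v : Pm n) (y : ℕ → Pm n) : Prop :=
  y 0 = u ∧ (∀ j, h ≤ j → y j = v) ∧ ∀ i, i < h → TSE n h F (y i, i) (y (i + 1), i + 1)

/-- The set of labels of the paths of `F`. -/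
def labelSet (n h : ℕ) (F : Set (ℕ → Pm n)) : Set (Pm n) :=
  {t | ∃ p ∈ F, ∃ i, i < h ∧ lab p i = t}

/-- Lexicographic order on the transpositions of `𝔖ₙ`:
`(a,b) ⪯ (c,d)` (with `a<b`, `c<d`) iff `a < c`, or `a = c` and `b ≤ d`. -/
def lexLe (n : ℕ) (s t : Pm n) : Prop :=
  ∃ a b c d : Fin n, a < b ∧ c < d ∧ s = Equiv.swap a b ∧ t = Equiv.swap c d ∧
    (a < c ∨ (a = c ∧ b ≤ d))

/-- Isomorphism of flipclasses: a pair `(f, g)` where `f` is a flips-preserving bijection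
on the underlying permutations (inducing a bijection of the path sets), and `g` is a
label-matching bijection of the label sets that is order preserving w.r.t. the
lexicographic orders. -/
def FlipclassIso (n m h : ℕ) (F : Set (ℕ → Pm n)) (F' : Set (ℕ → Pm m)) : Prop :=
  ∃ f : Pm n → Pm m, ∃ g : Pm n → Pm m,
    Set.BijOn f (SV n h F) (SV m h F') ∧
    Set.BijOn (fun p => f ∘ p) F F' ∧
    (∀ p ∈ F, ∀ q ∈ F, ∀ i, FlipAt h i p q → FlipAt h i (f ∘ p) (f ∘ q)) ∧
    Set.BijOn g (labelSet n h F) (labelSet m h F') ∧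
    (∀ p ∈ F, ∀ i, i < h → g (lab p i) = lab (f ∘ p) i) ∧
    (∀ s t, s ∈ labelSet n h F → t ∈ labelSet n h F → lexLe n s t → lexLe m (g s) (g t))

/-- `G(Γ)` is connected: any two letters moved by some label of the path `p` are joined
by a chain of labels. -/
def IrredPath (n k : ℕ) (p : ℕ → Pm n) : Prop :=
  ∀ a b : Fin n, (∃ i, i < k ∧ lab p i a ≠ a) → (∃ i, i < k ∧ lab p i b ≠ b) →
    Relation.ReflTransGen (fun x y => ∃ i, i < k ∧ lab p i = Equiv.swap x y) a b

/-- The set of positions of the values in `E` in the one-line notation of `w`,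
i.e. `w⁻¹(E)`. -/
def posSet {n : ℕ} (w : Pm n) (E : Finset (Fin n)) : Finset (Fin n) := E.image ⇑w.symm

lemma mem_posSet {n : ℕ} {w : Pm n} {E : Finset (Fin n)} {x : Fin n} :
    x ∈ posSet w E ↔ w x ∈ E := by
  constructor
  · intro hx
    rcases Finset.mem_image.mp hx with ⟨y, hy, rfl⟩
    simpa using hy
  · intro hx
    exact Finset.mem_image.mpr ⟨w x, hx, by simp⟩

lemma posSet_card {n : ℕ} (w : Pm n) (E : Finset (Fin n)) : (posSet w E).card = E.card :=
  Finset.card_image_of_injective _ w.symm.injective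

/-- The "pattern" map `r_E : 𝔖ₙ → 𝔖ₘ` (`|E| = m`): delete from the one-line notation of
`w` the values not in `E`, and renumber the values in `E` via the order preserving
bijection `E → [m]`. -/
noncomputable def rE (n m : ℕ) (E : Finset (Fin n)) (hm : E.card = m) (w : Pm n) : Pm m :=
  (((posSet w E).orderIsoOfFin (by rw [posSet_card, hm])).toEquiv.trans
    (⟨fun x => ⟨w x.1, mem_posSet.mp x.2⟩,
      fun y => ⟨w.symm y.1, mem_posSet.mpr (by simp [y.2])⟩,
      fun x => Subtype.ext (by simp),
      fun y => Subtype.ext (by simp)⟩ :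
        {x // x ∈ posSet w E} ≃ {y // y ∈ E})).trans (E.orderIsoOfFin hm).toEquiv.symm

/-- `r_E` applied to each vertex of a path. -/
noncomputable def rEPath (n m : ℕ) (E : Finset (Fin n)) (hm : E.card = m)
    (p : ℕ → Pm n) : ℕ → Pm m := fun j => rE n m E hm (p j)

/-- The total order `⪯_{r_E}` induced on the transpositions of `𝔖ₘ` by a reflection
ordering of `𝔖ₙ` via the order preserving bijection `r_E⁻¹ : [m] → E`. -/
def inducedOrd (n m : ℕ) (ord : ReflOrder n) (E : Finset (Fin n)) (hm : E.card = m) :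
    Pm m → Pm m → Prop := fun s t =>
  ∃ a b c d : Fin m, a < b ∧ c < d ∧ s = Equiv.swap a b ∧ t = Equiv.swap c d ∧
    ord.le (Equiv.swap (↑(E.orderIsoOfFin hm a)) (↑(E.orderIsoOfFin hm b)))
           (Equiv.swap (↑(E.orderIsoOfFin hm c)) (↑(E.orderIsoOfFin hm d)))

/-- Isomorphism of (unlabelled, or labelled with determined labels) directed graphs. -/
def GraphIso {α β : Type*} (V1 : Set α) (E1 : α → α → Prop)
    (V2 : Set β) (E2 : β → β → Prop) : Prop :=
  ∃ φ : α → β, Set.BijOn φ V1 V2 ∧ ∀ x ∈ V1, ∀ y ∈ V1, (E1 x y ↔ E2 (φ x) (φ y))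

/-- Vertices of the `k`-crown: `u`, `a₁,…,a_k`, `b₁,…,b_k`, `v`. -/
def CrownV (k : ℕ) : Type := (Unit ⊕ Fin k) ⊕ (Fin k ⊕ Unit)

/-- Edges of the `k`-crown: `u → aᵢ`, `aᵢ → bᵢ`, `a_{i+1} → bᵢ` (indices mod `k`),
`bᵢ → v`. -/
def crownEdge (k : ℕ) : CrownV k → CrownV k → Prop
  | Sum.inl (Sum.inl _), Sum.inl (Sum.inr _) => True
  | Sum.inl (Sum.inr i), Sum.inr (Sum.inl j) => i.val = j.val ∨ i.val = (j.val + 1) % k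
  | Sum.inr (Sum.inl _), Sum.inr (Sum.inr _) => True
  | _, _ => False

/-- The set `W₁ · W₂` (internal direct product when supports are disjoint). -/
def dprod {n : ℕ} (W1 W2 : Subgroup (Pm n)) : Set (Pm n) :=
  {w | ∃ w1 ∈ W1, ∃ w2 ∈ W2, w = w1 * w2}

/-- A path in the subgraph of the Bruhat graph induced on the subset `X`. -/
def IsPathIn (n : ℕ) (X : Set (Pm n)) (h : ℕ) (u v : Pm n) (p : ℕ → Pm n) : Prop :=
  IsPath n h u v p ∧ ∀ j, p j ∈ X

/-- Flip step within the induced subgraph on `X`. -/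
def FlipStepIn (n : ℕ) (X : Set (Pm n)) (h : ℕ) (u v : Pm n) (p q : ℕ → Pm n) : Prop :=
  IsPathIn n X h u v p ∧ IsPathIn n X h u v q ∧ ∃ i, FlipAt h i p q

/-- Flipclass of paths in the induced subgraph on `X`. -/
def IsFlipclassIn (n : ℕ) (X : Set (Pm n)) (h : ℕ) (u v : Pm n)
    (F : Set (ℕ → Pm n)) : Prop :=
  ∃ p, IsPathIn n X h u v p ∧ F = {q | Relation.ReflTransGen (FlipStepIn n X h u v) p q}

/-- `Δ` (a path of length `k`, normalized) is the projection (deduplication) of the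
vertexwise-projected sequence `s` (defined on `0,…,hh`). -/
def IsProj (n hh k : ℕ) (s Δ : ℕ → Pm n) : Prop :=
  ∃ φ : ℕ → ℕ, Monotone φ ∧ φ 0 = 0 ∧ (∀ j, hh ≤ j → φ j = k) ∧
    (∀ j, j < hh →
      (s (j + 1) = s j ∧ φ (j + 1) = φ j) ∨ (s (j + 1) ≠ s j ∧ φ (j + 1) = φ j + 1)) ∧
    (∀ j, j ≤ hh → s j = Δ (φ j)) ∧ ∀ j, k ≤ j → Δ j = Δ k

/-! Every label of a path in `F` moves only letters of `E`, so every vertex of such a path is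
`g * u` with `g` fixing all letters outside `E`. On permutations supported in `E`, `r_E` is a
group isomorphism onto `𝔖ₘ`, and `r_E (g * w) = r_E g * r_E w`; in particular `r_E` is
injective on the coset of `u`. Whether a transposition of two letters of `E` raises the length
of `w` depends only on the relative order of their positions in `w`, which `r_E` preserves, so
`r_E` maps the Bruhat edges inside the coset exactly onto Bruhat edges, and every flip of
`r_E(Γ)` lifts to a flip of `Γ`. -/

def inversions {n : ℕ} (w : Pm n) : Finset (Fin n × Fin n) :=
  Finset.univ.filter fun q : Fin n × Fin n => q.1 < q.2 ∧ w q.2 < w q.1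

lemma mem_inversions {n : ℕ} {w : Pm n} {q : Fin n × Fin n} :
    q ∈ inversions w ↔ q.1 < q.2 ∧ w q.2 < w q.1 := by
  simp [inversions]

lemma lt_of_not_lt_swap {n : ℕ} (w : Pm n) {i j p q : Fin n} (hij : i < j) (hw : w i < w j)
    (hpq : p < q) (hτ : ¬ Equiv.swap i j p < Equiv.swap i j q) (hinv : w q < w p) :
    w (Equiv.swap i j q) < w (Equiv.swap i j p) := by
  simp only [Equiv.swap_apply_def] at hτ ⊢
  split_ifs at hτ ⊢ <;> subst_vars <;> grind

lemma len_lt_mul_swap {n : ℕ} (w : Pm n) {i j : Fin n} (hij : i < j) (hw : w i < w j) :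
    len w < len (w * Equiv.swap i j) := by
  set τ := Equiv.swap i j
  -- `Φ` keeps an inversion `(p, q)` of `w` if `τ` reverses the order of `p < q`, and otherwise
  -- sends it to the inversion `(τ p, τ q)` of `w * τ`; it is injective because `τ` is an
  -- involution, and it misses the new inversion `(i, j)`.
  let Φ : Fin n × Fin n → Fin n × Fin n := fun q =>
    if τ q.1 < τ q.2 then (τ q.1, τ q.2) else q
  have hmaps : ∀ q ∈ inversions w, Φ q ∈ (inversions (w * τ)).erase (i, j) := by
    rintro ⟨p, q⟩ hq
    rw [mem_inversions] at hq
    simp only [Φ, Finset.mem_erase, mem_inversions, Equiv.Perm.mul_apply]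
    split_ifs with hτ
    · refine ⟨fun h => ?_, hτ, by simpa [τ] using hq.2⟩
      simp only [Prod.mk.injEq, τ, Equiv.swap_apply_eq_iff, Equiv.swap_apply_left,
        Equiv.swap_apply_right] at h
      exact absurd (h.1 ▸ h.2 ▸ hq.1) (asymm hij)
    · refine ⟨fun h => ?_, hq.1, lt_of_not_lt_swap w hij hw hq.1 hτ hq.2⟩
      simp only [Prod.mk.injEq] at h
      exact absurd (h.1 ▸ h.2 ▸ hq.2) (asymm hw)
  have hinj : Set.InjOn Φ (inversions w) := by
    rintro ⟨p, q⟩ hpq ⟨p', q'⟩ hpq' h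
    simp only [Finset.mem_coe, mem_inversions] at hpq hpq'
    simp only [Φ] at h
    split_ifs at h with h1 h2 h2
    · simpa [τ] using h
    · simp only [Prod.mk.injEq] at h
      exact absurd (by simpa [τ, ← h.1, ← h.2] using hpq.1) h2
    · simp only [Prod.mk.injEq] at h
      exact absurd (by simpa [τ, h.1, h.2] using hpq'.1) h1
    · exact h
  have hij_mem : (i, j) ∈ inversions (w * τ) := by simp [mem_inversions, τ, hij, hw]
  calc len w = ((inversions w).image Φ).card := (Finset.card_image_of_injOn hinj).symm
    _ ≤ ((inversions (w * τ)).erase (i, j)).card :=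
        Finset.card_le_card (Finset.image_subset_iff.mpr hmaps)
    _ < len (w * τ) := Finset.card_erase_lt_of_mem hij_mem

lemma len_lt_swap_mul_iff {n : ℕ} (w : Pm n) {x y : Fin n} (hxy : x < y) :
    len w < len (Equiv.swap x y * w) ↔ w⁻¹ x < w⁻¹ y := by
  have key : ∀ w : Pm n, w⁻¹ x < w⁻¹ y → len w < len (Equiv.swap x y * w) := by
    intro w hw
    rw [Equiv.swap_mul_eq_mul_swap]
    exact len_lt_mul_swap w hw (by simpa using hxy)
  refine ⟨fun hlen => ?_, key w⟩
  by_contra hle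
  have hne : w⁻¹ y ≠ w⁻¹ x := by simpa using hxy.ne'
  have := key (Equiv.swap x y * w)
    (by simpa [mul_inv_rev] using lt_of_le_of_ne (not_lt.mp hle) hne)
  rw [← mul_assoc, Equiv.swap_mul_self, one_mul] at this
  exact lt_asymm hlen this

lemma Equiv.Perm.IsSwap.exists_lt {α : Type*} [LinearOrder α] {f : Equiv.Perm α}
    (hf : f.IsSwap) : ∃ x y, x < y ∧ f = Equiv.swap x y := by
  obtain ⟨x, y, hxy, rfl⟩ := hf
  rcases hxy.lt_or_gt with h | h
  · exact ⟨x, y, h, rfl⟩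
  · exact ⟨y, x, h, Equiv.swap_comm x y⟩

def permSupportedIn {n : ℕ} (E : Finset (Fin n)) : Subgroup (Pm n) :=
  fixingSubgroup (Pm n) (E : Set (Fin n))ᶜ

section PatternMap

variable {n m : ℕ} {E : Finset (Fin n)} {g w : Pm n}

lemma mem_permSupportedIn : g ∈ permSupportedIn E ↔ ∀ z ∉ E, g z = z := by
  simp [permSupportedIn, mem_fixingSubgroup_iff]

lemma apply_mem_iff_of_mem_permSupportedIn (hg : g ∈ permSupportedIn E) (z : Fin n) :
    g z ∈ E ↔ z ∈ E := by
  rw [mem_permSupportedIn] at hg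
  refine ⟨fun h => ?_, fun h => ?_⟩ <;> by_contra hz
  · exact hz (hg z hz ▸ h)
  · exact hz (by rwa [g.injective (hg _ hz)])

lemma posSet_mul_of_mem (hg : g ∈ permSupportedIn E) (w : Pm n) :
    posSet (g * w) E = posSet w E := by
  ext x
  simp only [mem_posSet, Equiv.Perm.mul_apply, apply_mem_iff_of_mem_permSupportedIn hg]

lemma posSet_of_mem (hg : g ∈ permSupportedIn E) : posSet g E = E := by
  ext x
  simp only [mem_posSet, apply_mem_iff_of_mem_permSupportedIn hg]

lemma swap_mem_permSupportedIn {x y : Fin n} (hx : x ∈ E) (hy : y ∈ E) :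
    Equiv.swap x y ∈ permSupportedIn E :=
  mem_permSupportedIn.mpr fun _ hz =>
    Equiv.swap_apply_of_ne_of_ne (fun h => hz (h ▸ hx)) (fun h => hz (h ▸ hy))

lemma swap_mem_permSupportedIn_iff {x y : Fin n} (hxy : x ≠ y) :
    Equiv.swap x y ∈ permSupportedIn E ↔ x ∈ E ∧ y ∈ E := by
  refine ⟨fun hs => ⟨?_, ?_⟩, fun h => swap_mem_permSupportedIn h.1 h.2⟩ <;> by_contra hz
  · exact hxy.symm (by simpa using mem_permSupportedIn.mp hs x hz)
  · exact hxy (by simpa using mem_permSupportedIn.mp hs y hz)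

variable (hm : E.card = m)

lemma exists_coe_orderIsoOfFin_eq {z : Fin n} (hz : z ∈ E) :
    ∃ k, (E.orderIsoOfFin hm k : Fin n) = z :=
  ⟨(E.orderIsoOfFin hm).symm ⟨z, hz⟩, by simp⟩

lemma coe_orderIsoOfFin_congr {s t : Finset (Fin n)} (hst : s = t) (hs : s.card = m)
    (ht : t.card = m) (k : Fin m) : (s.orderIsoOfFin hs k : Fin n) = t.orderIsoOfFin ht k := by
  subst hst; rfl

lemma coe_orderIsoOfFin_rE (w : Pm n) (k : Fin m) :
    (E.orderIsoOfFin hm (rE n m E hm w k) : Fin n) =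
      w ((posSet w E).orderIsoOfFin (by rw [posSet_card, hm]) k) := by
  simp [rE]

lemma coe_orderIsoOfFin_rE_of_mem (hg : g ∈ permSupportedIn E) (k : Fin m) :
    (E.orderIsoOfFin hm (rE n m E hm g k) : Fin n) = g (E.orderIsoOfFin hm k) := by
  rw [coe_orderIsoOfFin_rE, coe_orderIsoOfFin_congr (posSet_of_mem hg)]

lemma coe_orderIsoOfFin_posSet_rE_inv (w : Pm n) (k : Fin m) :
    ((posSet w E).orderIsoOfFin (by rw [posSet_card, hm]) ((rE n m E hm w)⁻¹ k) : Fin n) =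
      w⁻¹ (E.orderIsoOfFin hm k) := by
  rw [Equiv.Perm.eq_inv_iff_eq, ← coe_orderIsoOfFin_rE hm, ← Equiv.Perm.mul_apply,
    mul_inv_cancel, Equiv.Perm.one_apply]

lemma rE_mul_of_mem (hg : g ∈ permSupportedIn E) (w : Pm n) :
    rE n m E hm (g * w) = rE n m E hm g * rE n m E hm w := by
  refine Equiv.ext fun k => ?_
  rw [Equiv.Perm.mul_apply, ← (E.orderIsoOfFin hm).injective.eq_iff, ← Subtype.coe_inj,
    coe_orderIsoOfFin_rE_of_mem hm hg, coe_orderIsoOfFin_rE, coe_orderIsoOfFin_rE,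
    coe_orderIsoOfFin_congr (posSet_mul_of_mem hg w), Equiv.Perm.mul_apply]

lemma rE_one : rE n m E hm 1 = 1 := by
  simpa using rE_mul_of_mem hm (permSupportedIn E).one_mem 1

lemma rE_injOn : Set.InjOn (rE n m E hm) (permSupportedIn E) := by
  intro g hg g' hg' h
  ext z
  by_cases hz : z ∈ E
  · obtain ⟨k, rfl⟩ := exists_coe_orderIsoOfFin_eq hm hz
    rw [← coe_orderIsoOfFin_rE_of_mem hm hg, ← coe_orderIsoOfFin_rE_of_mem hm hg', h]
  · rw [mem_permSupportedIn.mp hg z hz, mem_permSupportedIn.mp hg' z hz]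

lemma exists_mem_rE_eq (σ : Pm m) : ∃ g ∈ permSupportedIn E, rE n m E hm g = σ := by
  set g := Equiv.Perm.ofSubtype ((E.orderIsoOfFin hm).toEquiv.permCongr σ)
  have hg : g ∈ permSupportedIn E :=
    mem_permSupportedIn.mpr fun z hz => Equiv.Perm.ofSubtype_apply_of_not_mem _ hz
  refine ⟨g, hg, Equiv.ext fun k => ?_⟩
  rw [← (E.orderIsoOfFin hm).injective.eq_iff, ← Subtype.coe_inj,
    coe_orderIsoOfFin_rE_of_mem hm hg, Equiv.Perm.ofSubtype_apply_coe]
  simp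

lemma rE_swap_orderIsoOfFin (k l : Fin m) :
    rE n m E hm (Equiv.swap (E.orderIsoOfFin hm k) (E.orderIsoOfFin hm l)) = Equiv.swap k l := by
  have hs := swap_mem_permSupportedIn (E.orderIsoOfFin hm k).2 (E.orderIsoOfFin hm l).2
  refine Equiv.ext fun j => ?_
  rw [← (E.orderIsoOfFin hm).injective.eq_iff, ← Subtype.coe_inj,
    coe_orderIsoOfFin_rE_of_mem hm hs]
  exact (Subtype.val_injective.comp (E.orderIsoOfFin hm).injective).swap_apply k l j

lemma eq_swap_of_rE_eq_swap (hg : g ∈ permSupportedIn E) {k l : Fin m}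
    (h : rE n m E hm g = Equiv.swap k l) :
    g = Equiv.swap (E.orderIsoOfFin hm k : Fin n) (E.orderIsoOfFin hm l) :=
  rE_injOn hm hg (swap_mem_permSupportedIn (E.orderIsoOfFin hm k).2 (E.orderIsoOfFin hm l).2)
    (h.trans (rE_swap_orderIsoOfFin hm k l).symm)

lemma isSwap_rE_iff (hg : g ∈ permSupportedIn E) : (rE n m E hm g).IsSwap ↔ g.IsSwap := by
  constructor
  · rintro ⟨k, l, hkl, hs⟩
    exact ⟨_, _, fun h => hkl ((E.orderIsoOfFin hm).injective (Subtype.ext h)),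
      eq_swap_of_rE_eq_swap hm hg hs⟩
  · rintro ⟨x, y, hxy, rfl⟩
    obtain ⟨hx, hy⟩ := (swap_mem_permSupportedIn_iff hxy).mp hg
    obtain ⟨k, rfl⟩ := exists_coe_orderIsoOfFin_eq hm hx
    obtain ⟨l, rfl⟩ := exists_coe_orderIsoOfFin_eq hm hy
    exact ⟨k, l, fun h => hxy (h ▸ rfl), rE_swap_orderIsoOfFin hm k l⟩

lemma bEdge_mul_iff_rE (hg : g ∈ permSupportedIn E) (a : Pm n) :
    BEdge a (g * a) ↔ BEdge (rE n m E hm a) (rE n m E hm (g * a)) := by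
  simp only [BEdge, mul_inv_cancel_right, rE_mul_of_mem hm hg, isSwap_rE_iff hm hg]
  refine and_congr_right fun hs => ?_
  obtain ⟨k, l, hkl, hrs⟩ := ((isSwap_rE_iff hm hg).mpr hs).exists_lt
  rw [hrs, eq_swap_of_rE_eq_swap hm hg hrs, len_lt_swap_mul_iff _ hkl,
    len_lt_swap_mul_iff _ (Subtype.coe_lt_coe.mpr ((E.orderIsoOfFin hm).lt_iff_lt.mpr hkl)),
    ← coe_orderIsoOfFin_posSet_rE_inv hm, ← coe_orderIsoOfFin_posSet_rE_inv hm,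
    Subtype.coe_lt_coe, OrderIso.lt_iff_lt]

lemma inducedOrd_rE_iff (ord : ReflOrder n) {s t : Pm n} (hs : s ∈ permSupportedIn E)
    (ht : t ∈ permSupportedIn E) (hs' : s.IsSwap) (ht' : t.IsSwap) :
    inducedOrd n m ord E hm (rE n m E hm s) (rE n m E hm t) ↔ ord.le s t := by
  constructor
  · rintro ⟨a, b, c, d, -, -, hab, hcd, hle⟩
    rwa [eq_swap_of_rE_eq_swap hm hs hab, eq_swap_of_rE_eq_swap hm ht hcd]
  · intro hle
    obtain ⟨a, b, hab, hsab⟩ := ((isSwap_rE_iff hm hs).mpr hs').exists_lt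
    obtain ⟨c, d, hcd, htcd⟩ := ((isSwap_rE_iff hm ht).mpr ht').exists_lt
    refine ⟨a, b, c, d, hab, hcd, hsab, htcd, ?_⟩
    rwa [← eq_swap_of_rE_eq_swap hm hs hsab, ← eq_swap_of_rE_eq_swap hm ht htcd]

lemma lexLe_rE {s t : Pm n} (hs : s ∈ permSupportedIn E) (ht : t ∈ permSupportedIn E)
    (hst : lexLe n s t) : lexLe m (rE n m E hm s) (rE n m E hm t) := by
  obtain ⟨a, b, c, d, hab, hcd, rfl, rfl, hlex⟩ := hst
  obtain ⟨ha, hb⟩ := (swap_mem_permSupportedIn_iff hab.ne).mp hs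
  obtain ⟨hc, hd⟩ := (swap_mem_permSupportedIn_iff hcd.ne).mp ht
  obtain ⟨k, rfl⟩ := exists_coe_orderIsoOfFin_eq hm ha
  obtain ⟨l, rfl⟩ := exists_coe_orderIsoOfFin_eq hm hb
  obtain ⟨k', rfl⟩ := exists_coe_orderIsoOfFin_eq hm hc
  obtain ⟨l', rfl⟩ := exists_coe_orderIsoOfFin_eq hm hd
  simp only [Subtype.coe_lt_coe, Subtype.coe_le_coe, Subtype.coe_inj, OrderIso.lt_iff_lt,
    OrderIso.le_iff_le, (E.orderIsoOfFin hm).injective.eq_iff] at hab hcd hlex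
  exact ⟨k, l, k', l', hab, hcd, rE_swap_orderIsoOfFin hm k l, rE_swap_orderIsoOfFin hm k' l',
    hlex⟩

end PatternMap

section Paths

variable {n m h : ℕ} {E : Finset (Fin n)} (hm : E.card = m)

lemma mul_inv_mem_of_mul_inv_mem {a b u : Pm n} (ha : a * u⁻¹ ∈ permSupportedIn E)
    (hb : b * u⁻¹ ∈ permSupportedIn E) : a * b⁻¹ ∈ permSupportedIn E := by
  simpa [mul_assoc] using (permSupportedIn E).mul_mem ha ((permSupportedIn E).inv_mem hb)

lemma eq_of_rE_eq_of_mul_inv_mem {a b : Pm n} (hab : a * b⁻¹ ∈ permSupportedIn E)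
    (h : rE n m E hm a = rE n m E hm b) : a = b := by
  have h1 : rE n m E hm (a * b⁻¹) = 1 := by simpa [h] using rE_mul_of_mem hm hab b
  exact mul_inv_eq_one.mp (rE_injOn hm hab (permSupportedIn E).one_mem
    (h1.trans (rE_one hm).symm))

lemma bEdge_iff_rE {a b : Pm n} (hab : b * a⁻¹ ∈ permSupportedIn E) :
    BEdge a b ↔ BEdge (rE n m E hm a) (rE n m E hm b) := by
  simpa using bEdge_mul_iff_rE hm hab a

lemma rE_mul_inv {a b : Pm n} (hab : b * a⁻¹ ∈ permSupportedIn E) :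
    rE n m E hm (b * a⁻¹) = rE n m E hm b * (rE n m E hm a)⁻¹ := by
  simpa using congrArg (· * (rE n m E hm a)⁻¹) (rE_mul_of_mem hm hab a).symm

variable {u v : Pm n} {p q : ℕ → Pm n}

lemma rE_lab {i : ℕ} (hpi : lab p i ∈ permSupportedIn E) :
    rE n m E hm (lab p i) = lab (rEPath n m E hm p) i :=
  rE_mul_inv hm hpi

lemma isPath_iff_isPath_rEPath (hv : v * u⁻¹ ∈ permSupportedIn E)
    (hp : ∀ j, p j * u⁻¹ ∈ permSupportedIn E) :
    IsPath n h u v p ↔ IsPath m h (rE n m E hm u) (rE n m E hm v) (rEPath n m E hm p) := by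
  have hpv : ∀ j, p j * v⁻¹ ∈ permSupportedIn E := fun j =>
    mul_inv_mem_of_mul_inv_mem (hp j) hv
  have hedge : ∀ j, p (j + 1) * (p j)⁻¹ ∈ permSupportedIn E := fun j =>
    mul_inv_mem_of_mul_inv_mem (hp (j + 1)) (hp j)
  refine and_congr ⟨congrArg _, eq_of_rE_eq_of_mul_inv_mem hm (hp 0)⟩ (and_congr ?_ ?_)
  · exact forall_congr' fun j => imp_congr_right fun _ =>
      ⟨congrArg _, eq_of_rE_eq_of_mul_inv_mem hm (hpv j)⟩
  · exact forall_congr' fun j => imp_congr_right fun _ => bEdge_iff_rE hm (hedge j)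

lemma flipAt_rEPath_of_mul_inv_mem {i : ℕ} (hpq : p i * (q i)⁻¹ ∈ permSupportedIn E)
    (hflip : FlipAt h i p q) :
    FlipAt h i (rEPath n m E hm p) (rEPath n m E hm q) := by
  obtain ⟨hi0, hih, hne, hagree⟩ := hflip
  exact ⟨hi0, hih, fun heq => hne (eq_of_rE_eq_of_mul_inv_mem hm hpq heq),
    fun j hj => congrArg (rE n m E hm) (hagree j hj)⟩

end Paths

def LabelsSupportedIn {n : ℕ} (h : ℕ) (F : Set (ℕ → Pm n)) (E : Finset (Fin n)) : Prop :=
  ∀ p ∈ F, ∀ i < h, lab p i ∈ permSupportedIn E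

section Flipclass

variable {n m h : ℕ} {u v : Pm n} {F : Set (ℕ → Pm n)} {E : Finset (Fin n)}
  {p q : ℕ → Pm n}

lemma IsFlipclass.isPath (hF : IsFlipclass n h u v F) (hp : p ∈ F) : IsPath n h u v p := by
  obtain ⟨p₀, hp₀, rfl⟩ := hF
  rcases Relation.ReflTransGen.cases_tail hp with rfl | ⟨_, _, hstep⟩
  · exact hp₀
  · exact hstep.2.1

lemma IsFlipclass.mem_of_flipStep (hF : IsFlipclass n h u v F) (hp : p ∈ F)
    (hpq : FlipStep n h u v p q) : q ∈ F := by
  obtain ⟨p₀, -, rfl⟩ := hF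
  exact Relation.ReflTransGen.tail hp hpq

lemma IsFlipclass.apply_mul_inv_mem (hF : IsFlipclass n h u v F)
    (hFE : LabelsSupportedIn h F E) (hp : p ∈ F) (j : ℕ) :
    p j * u⁻¹ ∈ permSupportedIn E := by
  have hpath := hF.isPath hp
  have hle : ∀ j ≤ h, p j * u⁻¹ ∈ permSupportedIn E := by
    intro j hj
    induction j with
    | zero => simp [hpath.1, one_mem]
    | succ j ih =>
      have : p (j + 1) * u⁻¹ = lab p j * (p j * u⁻¹) := by simp [lab, mul_assoc]
      exact this ▸ mul_mem (hFE p hp j hj) (ih (by omega))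
  rcases le_total j h with hj | hj
  · exact hle j hj
  · rw [hpath.2.1 j hj, ← hpath.2.1 h le_rfl]
    exact hle h le_rfl

lemma IsFlipclass.target_mul_inv_mem (hF : IsFlipclass n h u v F)
    (hFE : LabelsSupportedIn h F E) : v * u⁻¹ ∈ permSupportedIn E := by
  obtain ⟨p₀, hp₀, hFeq⟩ := id hF
  have hp₀F : p₀ ∈ F := hFeq ▸ Relation.ReflTransGen.refl
  simpa [hp₀.2.1 h le_rfl] using hF.apply_mul_inv_mem hFE hp₀F h

variable (hm : E.card = m)

lemma IsFlipclass.isPath_rEPath (hF : IsFlipclass n h u v F)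
    (hFE : LabelsSupportedIn h F E) (hp : p ∈ F) :
    IsPath m h (rE n m E hm u) (rE n m E hm v) (rEPath n m E hm p) :=
  (isPath_iff_isPath_rEPath hm (hF.target_mul_inv_mem hFE) (hF.apply_mul_inv_mem hFE hp)).mp
    (hF.isPath hp)

lemma IsFlipclass.eq_of_rE_eq (hF : IsFlipclass n h u v F)
    (hFE : LabelsSupportedIn h F E) (hp : p ∈ F) (hq : q ∈ F) {i j : ℕ}
    (hpq : rE n m E hm (p i) = rE n m E hm (q j)) : p i = q j :=
  eq_of_rE_eq_of_mul_inv_mem hm (mul_inv_mem_of_mul_inv_mem (hF.apply_mul_inv_mem hFE hp i)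
    (hF.apply_mul_inv_mem hFE hq j)) hpq

lemma IsFlipclass.flipAt_rEPath (hF : IsFlipclass n h u v F)
    (hFE : LabelsSupportedIn h F E) (hp : p ∈ F) (hq : q ∈ F) {i : ℕ}
    (hflip : FlipAt h i p q) : FlipAt h i (rEPath n m E hm p) (rEPath n m E hm q) :=
  flipAt_rEPath_of_mul_inv_mem hm
    (mul_inv_mem_of_mul_inv_mem (hF.apply_mul_inv_mem hFE hp i)
      (hF.apply_mul_inv_mem hFE hq i)) hflip

lemma IsFlipclass.flipStep_rEPath (hF : IsFlipclass n h u v F)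
    (hFE : LabelsSupportedIn h F E) (hp : p ∈ F)
    (hpq : FlipStep n h u v p q) :
    FlipStep m h (rE n m E hm u) (rE n m E hm v) (rEPath n m E hm p) (rEPath n m E hm q) := by
  have hq := hF.mem_of_flipStep hp hpq
  obtain ⟨-, -, i, hflip⟩ := hpq
  exact ⟨hF.isPath_rEPath hm hFE hp, hF.isPath_rEPath hm hFE hq, i,
    hF.flipAt_rEPath hm hFE hp hq hflip⟩

lemma IsFlipclass.exists_flipStep_rEPath_eq (hF : IsFlipclass n h u v F)
    (hFE : LabelsSupportedIn h F E) (hp : p ∈ F) {q' : ℕ → Pm m}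
    (hstep : FlipStep m h (rE n m E hm u) (rE n m E hm v) (rEPath n m E hm p) q') :
    ∃ q, FlipStep n h u v p q ∧ rEPath n m E hm q = q' := by
  obtain ⟨-, hq', i, hi0, hih, hne, hagree⟩ := hstep
  obtain ⟨g, hg, hrg⟩ := exists_mem_rE_eq hm (q' i * (rE n m E hm (p i))⁻¹)
  set q := Function.update p i (g * p i)
  have hrq : rEPath n m E hm q = q' := by
    funext j
    rcases eq_or_ne j i with rfl | hj
    · simp [q, rEPath, rE_mul_of_mem hm hg, hrg]
    · simpa [q, rEPath, hj] using hagree j hj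
  have hqu : ∀ j, q j * u⁻¹ ∈ permSupportedIn E := by
    intro j
    rcases eq_or_ne j i with rfl | hj
    · simpa [q, mul_assoc] using mul_mem hg (hF.apply_mul_inv_mem hFE hp j)
    · simpa [q, hj] using hF.apply_mul_inv_mem hFE hp j
  have hqpath : IsPath n h u v q :=
    (isPath_iff_isPath_rEPath hm (hF.target_mul_inv_mem hFE) hqu).mpr (hrq ▸ hq')
  refine ⟨q, ⟨hF.isPath hp, hqpath, i, hi0, hih, fun heq => hne ?_, fun j hj => ?_⟩, hrq⟩
  · rw [← hrq]
    exact congrArg (rE n m E hm) heq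
  · simp [q, hj]

lemma IsFlipclass.image_rEPath (hF : IsFlipclass n h u v F)
    (hFE : LabelsSupportedIn h F E) :
    IsFlipclass m h (rE n m E hm u) (rE n m E hm v) (rEPath n m E hm '' F) := by
  obtain ⟨p₀, hp₀, hFeq⟩ := id hF
  have hp₀F : p₀ ∈ F := hFeq ▸ Relation.ReflTransGen.refl
  refine ⟨rEPath n m E hm p₀, hF.isPath_rEPath hm hFE hp₀F,
    Set.ext fun q' => ⟨?_, fun hq' => ?_⟩⟩
  · rintro ⟨p, hp, rfl⟩
    rw [hFeq] at hp
    induction hp with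
    | refl => exact Relation.ReflTransGen.refl
    | @tail b _ hab hbc ih =>
      have hb : b ∈ F := by rwa [hFeq]
      exact ih.tail (hF.flipStep_rEPath hm hFE hb hbc)
  · induction hq' with
    | refl => exact ⟨p₀, hp₀F, rfl⟩
    | tail _ hbc ih =>
      obtain ⟨p, hp, rfl⟩ := ih
      obtain ⟨q, hpq, rfl⟩ := hF.exists_flipStep_rEPath_eq hm hFE hp hbc
      exact ⟨q, hF.mem_of_flipStep hp hpq, rfl⟩

lemma IsFlipclass.injOn_rEPath (hF : IsFlipclass n h u v F)
    (hFE : LabelsSupportedIn h F E) : Set.InjOn (rEPath n m E hm) F :=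
  fun _ hp _ hq hpq => funext fun j => hF.eq_of_rE_eq hm hFE hp hq (congrFun hpq j)

lemma IsFlipclass.bijOn_SV (hF : IsFlipclass n h u v F)
    (hFE : LabelsSupportedIn h F E) :
    Set.BijOn (rE n m E hm) (SV n h F) (SV m h (rEPath n m E hm '' F)) := by
  refine ⟨?_, ?_, ?_⟩
  · rintro _ ⟨p, hp, i, hi, rfl⟩
    exact ⟨_, Set.mem_image_of_mem _ hp, i, hi, rfl⟩
  · rintro _ ⟨p, hp, i, -, rfl⟩ _ ⟨q, hq, j, -, rfl⟩ hpq
    exact hF.eq_of_rE_eq hm hFE hp hq hpq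
  · rintro _ ⟨_, ⟨p, hp, rfl⟩, i, hi, rfl⟩
    exact ⟨p i, ⟨p, hp, i, hi, rfl⟩, rfl⟩

lemma IsFlipclass.SE_iff (hF : IsFlipclass n h u v F)
    (hFE : LabelsSupportedIn h F E) {a b : Pm n} (ha : a ∈ SV n h F)
    (hb : b ∈ SV n h F) :
    SE n h F a b ↔ SE m h (rEPath n m E hm '' F) (rE n m E hm a) (rE n m E hm b) := by
  obtain ⟨pa, hpa, ia, -, rfl⟩ := ha
  obtain ⟨pb, hpb, ib, -, rfl⟩ := hb
  constructor
  · rintro ⟨p, hp, i, hi, h1, h2⟩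
    exact ⟨_, Set.mem_image_of_mem _ hp, i, hi, congrArg (rE n m E hm) h1,
      congrArg (rE n m E hm) h2⟩
  · rintro ⟨_, ⟨p, hp, rfl⟩, i, hi, h1, h2⟩
    exact ⟨p, hp, i, hi, hF.eq_of_rE_eq hm hFE hp hpa h1,
      hF.eq_of_rE_eq hm hFE hp hpb h2⟩

lemma IsFlipclass.bijOn_TSV (hF : IsFlipclass n h u v F)
    (hFE : LabelsSupportedIn h F E) :
    Set.BijOn (fun x : Pm n × ℕ => (rE n m E hm x.1, x.2)) (TSV n h F)
      (TSV m h (rEPath n m E hm '' F)) := by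
  refine ⟨?_, ?_, ?_⟩
  · rintro ⟨_, i⟩ ⟨hi, p, hp, rfl : p i = _⟩
    exact ⟨hi, _, Set.mem_image_of_mem _ hp, rfl⟩
  · rintro ⟨_, i⟩ ⟨-, p, hp, rfl : p i = _⟩ ⟨_, j⟩ ⟨-, q, hq, rfl : q j = _⟩ hpq
    obtain ⟨h1, rfl⟩ := Prod.mk.inj hpq
    rw [hF.eq_of_rE_eq hm hFE hp hq h1]
  · rintro ⟨_, i⟩ ⟨hi, _, ⟨p, hp, rfl⟩, rfl : rE n m E hm (p i) = _⟩
    exact ⟨(p i, i), ⟨hi, p, hp, rfl⟩, rfl⟩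

lemma IsFlipclass.TSE_iff (hF : IsFlipclass n h u v F)
    (hFE : LabelsSupportedIn h F E) {x y : Pm n × ℕ}
    (hx : x ∈ TSV n h F) (hy : y ∈ TSV n h F) :
    TSE n h F x y ↔
      TSE m h (rEPath n m E hm '' F) (rE n m E hm x.1, x.2) (rE n m E hm y.1, y.2) := by
  obtain ⟨a, i⟩ := x
  obtain ⟨b, j⟩ := y
  obtain ⟨-, pa, hpa, rfl : pa i = a⟩ := hx
  obtain ⟨-, pb, hpb, rfl : pb j = b⟩ := hy
  constructor
  · rintro ⟨hi, hj, p, hp, h1, h2⟩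
    exact ⟨hi, hj, _, Set.mem_image_of_mem _ hp, congrArg (rE n m E hm) h1,
      congrArg (rE n m E hm) h2⟩
  · rintro ⟨hi, hj, _, ⟨p, hp, rfl⟩, h1, h2⟩
    exact ⟨hi, hj, p, hp, hF.eq_of_rE_eq hm hFE hp hpa h1,
      hF.eq_of_rE_eq hm hFE hp hpb h2⟩

lemma IsFlipclass.increasingRel_iff (hF : IsFlipclass n h u v F)
    (hFE : LabelsSupportedIn h F E) (ord : ReflOrder n) (hp : p ∈ F) :
    IncreasingRel h ord.le p ↔ IncreasingRel h (inducedOrd n m ord E hm) (rEPath n m E hm p) := by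
  refine forall_congr' fun i => imp_congr_right fun hi => ?_
  have hswap : ∀ j < h, (lab p j).IsSwap := fun j hj => ((hF.isPath hp).2.2 j hj).1
  rw [← rE_lab hm (hFE p hp i (by omega)), ← rE_lab hm (hFE p hp (i + 1) hi),
    inducedOrd_rE_iff hm ord (hFE p hp i (by omega)) (hFE p hp (i + 1) hi)
      (hswap i (by omega)) (hswap (i + 1) hi)]

lemma IsFlipclass.flipclassIso_rE (hF : IsFlipclass n h u v F)
    (hFE : LabelsSupportedIn h F E) :
    FlipclassIso n m h F (rEPath n m E hm '' F) := by
  refine ⟨rE n m E hm, rE n m E hm, hF.bijOn_SV hm hFE,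
    ⟨fun p hp => Set.mem_image_of_mem _ hp, hF.injOn_rEPath hm hFE, fun _ hq => hq⟩,
    fun p hp q hq i => hF.flipAt_rEPath hm hFE hp hq, ⟨?_, ?_, ?_⟩,
    fun p hp i hi => rE_lab hm (hFE p hp i hi), ?_⟩
  · rintro _ ⟨p, hp, i, hi, rfl⟩
    exact ⟨_, Set.mem_image_of_mem _ hp, i, hi, (rE_lab hm (hFE p hp i hi)).symm⟩
  · rintro _ ⟨p, hp, i, hi, rfl⟩ _ ⟨q, hq, j, hj, rfl⟩ hpq
    exact rE_injOn hm (hFE p hp i hi) (hFE q hq j hj) hpq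
  · rintro _ ⟨_, ⟨p, hp, rfl⟩, i, hi, rfl⟩
    exact ⟨lab p i, ⟨p, hp, i, hi, rfl⟩, rE_lab hm (hFE p hp i hi)⟩
  · rintro _ _ ⟨p, hp, i, hi, rfl⟩ ⟨q, hq, j, hj, rfl⟩
    exact lexLe_rE hm (hFE p hp i hi) (hFE q hq j hj)

end Flipclass

/-- Lemma (reduction to `E = E(F)`): for a flipclass `F` with `E = E(F)`, `|E| = m`, the
map `r_E` sends `F` to a flipclass `F' = r_E(F)` of `𝔖ₘ`, bijectively, preserving flips
and matching the labels; it induces isomorphisms `S_F ≅ S_{F'}` and `TS_F ≅ TS_{F'}`;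
increasing paths w.r.t. `⪯` correspond to increasing paths w.r.t. `⪯_{r_E}`; and `r_E`
induces an isomorphism of flipclasses from `F` to `F'`. -/
theorem reduction_to_support (n h : ℕ) (u v : Pm n) (F : Set (ℕ → Pm n))
    (hF : IsFlipclass n h u v F) (E : Finset (Fin n))
    (hE : ∀ a : Fin n, a ∈ E ↔ ∃ p ∈ F, ∃ i, i < h ∧ lab p i a ≠ a)
    (m : ℕ) (hm : E.card = m) :
    -- (1)
    IsFlipclass m h (rE n m E hm u) (rE n m E hm v) (rEPath n m E hm '' F) ∧
    Set.InjOn (rEPath n m E hm) F ∧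
    (∀ p ∈ F, ∀ q ∈ F, ∀ i, FlipAt h i p q →
      FlipAt h i (rEPath n m E hm p) (rEPath n m E hm q)) ∧
    (∀ p ∈ F, ∀ i, i < h → rE n m E hm (lab p i) = lab (rEPath n m E hm p) i) ∧
    -- (2)
    Set.BijOn (rE n m E hm) (SV n h F) (SV m h (rEPath n m E hm '' F)) ∧
    (∀ a ∈ SV n h F, ∀ b ∈ SV n h F,
      (SE n h F a b ↔ SE m h (rEPath n m E hm '' F) (rE n m E hm a) (rE n m E hm b))) ∧
    Set.BijOn (fun x : Pm n × ℕ => (rE n m E hm x.1, x.2)) (TSV n h F)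
      (TSV m h (rEPath n m E hm '' F)) ∧
    (∀ x ∈ TSV n h F, ∀ y ∈ TSV n h F,
      (TSE n h F x y ↔
        TSE m h (rEPath n m E hm '' F) (rE n m E hm x.1, x.2) (rE n m E hm y.1, y.2))) ∧
    -- (3)
    (∀ ord : ReflOrder n, ∀ p ∈ F,
      (IncreasingRel h ord.le p ↔
        IncreasingRel h (inducedOrd n m ord E hm) (rEPath n m E hm p))) ∧
    -- (4)
    FlipclassIso n m h F (rEPath n m E hm '' F) := by
  have hFE : LabelsSupportedIn h F E := fun p hp i hi =>
    mem_permSupportedIn.mpr fun z hz => by_contra fun hne => hz ((hE z).mpr ⟨p, hp, i, hi, hne⟩)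
  exact ⟨hF.image_rEPath hm hFE, hF.injOn_rEPath hm hFE,
    fun p hp q hq i => hF.flipAt_rEPath hm hFE hp hq,
    fun p hp i hi => rE_lab hm (hFE p hp i hi),
    hF.bijOn_SV hm hFE, fun a ha b hb => hF.SE_iff hm hFE ha hb,
    hF.bijOn_TSV hm hFE, fun x hx y hy => hF.TSE_iff hm hFE hx hy,
    fun ord p hp => hF.increasingRel_iff hm hFE ord hp, hF.flipclassIso_rE hm hFE⟩
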